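/- arXiv:2404.01057 — 3 statements merged into one kernel-verified Lean document; each statement's English description precedes it below -/
import Mathlib

section
/- Let F be a field, d and k positive integers, and A ⊆ F^d a k-nearly orthogonal set. Then |A| is strictly less than the Ramsey number R(d+1, k+1); in particular |A| < C(d+k, k). -/
/-!
Vectors of `A` that are pairwise orthogonal and not self-orthogonal are linearly independent, so
the orthogonality graph on `A` has no clique of size `d + 1`, while near-orthogonality says it has
no independent set of size `k + 1`. Hence `|A| < R(d + 1, k + 1)`, and the Erdős–Szekeres
recursion `R(s + 1, t + 1) ≤ R(s, t + 1) + R(s + 1, t)` gives `R(d + 1, k + 1) ≤ C(d + k, k)`.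
-/

/-- The Ramsey number `R(s,t)`: the least `N` such that every graph on `N`
vertices contains a clique of size `s` or an independent set of size `t`. -/
noncomputable def ramseyNumber (s t : ℕ) : ℕ :=
  sInf {N : ℕ | ∀ G : SimpleGraph (Fin N),
    (∃ S : Finset (Fin N), G.IsNClique s S) ∨ (∃ S : Finset (Fin N), Gᶜ.IsNClique t S)}


open Finset

namespace SimpleGraph

variable {V : Type*}

lemma exists_isNClique_one_of_nonempty (G : SimpleGraph V) {A : Finset V} (hA : A.Nonempty) :
    ∃ S ⊆ A, G.IsNClique 1 S :=
  let ⟨v, hv⟩ := hA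
  ⟨{v}, singleton_subset_iff.mpr hv, isNClique_singleton.mpr rfl⟩

lemma exists_isNClique_succ_of_subset_neighbors [DecidableEq V] (G : SimpleGraph V)
    [DecidableRel G.Adj] {A : Finset V} {v : V}
    (hv : v ∈ A) {n : ℕ} (h : ∃ S ⊆ A.filter (G.Adj v), G.IsNClique n S) :
    ∃ S ⊆ A, G.IsNClique (n + 1) S := by
  obtain ⟨S, hSA, hS⟩ := h
  refine ⟨insert v S, insert_subset hv (hSA.trans (filter_subset _ _)), hS.insert ?_⟩
  exact fun b hb ↦ (mem_filter.mp (hSA hb)).2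

lemma card_le_card_filter_adj_add_card_filter_compl_adj_add_one [DecidableEq V]
    (G : SimpleGraph V) [DecidableRel G.Adj] (A : Finset V) (v : V) :
    #A ≤ #(A.filter (G.Adj v)) + #(A.filter (Gᶜ.Adj v)) + 1 := by
  have hsub : A ⊆ insert v (A.filter (G.Adj v) ∪ A.filter (Gᶜ.Adj v)) := by
    intro u hu
    by_cases huv : v = u
    · exact huv ▸ mem_insert_self _ _
    · by_cases hadj : G.Adj v u <;> simp [hu, hadj, huv, compl_adj]
  calc #A ≤ #(insert v (A.filter (G.Adj v) ∪ A.filter (Gᶜ.Adj v))) := card_le_card hsub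
    _ ≤ _ := (card_insert_le _ _).trans (by gcongr; exact card_union_le _ _)

/-- The Erdős–Szekeres bound `R(s + 1, t + 1) ≤ C(s + t, s)`, within a vertex set `A`. -/
theorem exists_isNClique_or_exists_compl_isNClique_of_choose_le [DecidableEq V]
    (G : SimpleGraph V) [DecidableRel G.Adj] :
    ∀ (s t : ℕ) (A : Finset V), (s + t).choose s ≤ #A →
      (∃ S ⊆ A, G.IsNClique (s + 1) S) ∨ ∃ S ⊆ A, Gᶜ.IsNClique (t + 1) S
  | 0, _, A, hA => .inl <| G.exists_isNClique_one_of_nonempty <| card_pos.mp <| by simpa using hA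
  | s + 1, 0, A, hA =>
    .inr <| Gᶜ.exists_isNClique_one_of_nonempty <| card_pos.mp <| by simpa using hA
  | s + 1, t + 1, A, hA => by
    obtain ⟨v, hv⟩ : A.Nonempty := card_pos.mp <| (Nat.choose_pos (by omega)).trans_le hA
    have hpascal : (s + 1 + (t + 1)).choose (s + 1) =
        (s + (t + 1)).choose s + (s + 1 + t).choose (s + 1) := by
      rw [show s + 1 + (t + 1) = s + t + 1 + 1 by omega, Nat.choose_succ_succ,
        show s + (t + 1) = s + t + 1 by omega, show s + 1 + t = s + t + 1 by omega]
    have hcard := G.card_le_card_filter_adj_add_card_filter_compl_adj_add_one A v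
    by_cases hN : (s + (t + 1)).choose s ≤ #(A.filter (G.Adj v))
    · rcases exists_isNClique_or_exists_compl_isNClique_of_choose_le G s (t + 1) _ hN with
        h | ⟨S, hS, hSc⟩
      · exact .inl (G.exists_isNClique_succ_of_subset_neighbors hv h)
      · exact .inr ⟨S, hS.trans (filter_subset _ _), hSc⟩
    · have hM : (s + 1 + t).choose (s + 1) ≤ #(A.filter (Gᶜ.Adj v)) := by omega
      rcases exists_isNClique_or_exists_compl_isNClique_of_choose_le G (s + 1) t _ hM with
        ⟨S, hS, hSc⟩ | h
      · exact .inl ⟨S, hS.trans (filter_subset _ _), hSc⟩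
      · exact .inr (Gᶜ.exists_isNClique_succ_of_subset_neighbors hv h)

end SimpleGraph

open SimpleGraph

lemma exists_isNClique_or_exists_compl_isNClique_of_choose_le_card {s t N : ℕ}
    (h : (s + t).choose s ≤ N) (G : SimpleGraph (Fin N)) :
    (∃ S, G.IsNClique (s + 1) S) ∨ ∃ S, Gᶜ.IsNClique (t + 1) S := by
  classical
  rcases G.exists_isNClique_or_exists_compl_isNClique_of_choose_le s t univ (by simpa using h)
    with ⟨S, -, hS⟩ | ⟨S, -, hS⟩
  exacts [.inl ⟨S, hS⟩, .inr ⟨S, hS⟩]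

section Ramsey

variable {s t N : ℕ}

theorem ramseyNumber_le
    (hN : ∀ G : SimpleGraph (Fin N), (∃ S, G.IsNClique s S) ∨ ∃ S, Gᶜ.IsNClique t S) :
    ramseyNumber s t ≤ N :=
  Nat.sInf_le hN

theorem exists_isNClique_or_exists_compl_isNClique_ramseyNumber
    (hN : ∀ G : SimpleGraph (Fin N), (∃ S, G.IsNClique s S) ∨ ∃ S, Gᶜ.IsNClique t S)
    (G : SimpleGraph (Fin (ramseyNumber s t))) :
    (∃ S, G.IsNClique s S) ∨ ∃ S, Gᶜ.IsNClique t S :=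
  Nat.sInf_mem (s := {N | ∀ G : SimpleGraph (Fin N),
    (∃ S, G.IsNClique s S) ∨ ∃ S, Gᶜ.IsNClique t S}) ⟨N, hN⟩ G

end Ramsey

theorem ramseyNumber_le_choose (s t : ℕ) : ramseyNumber (s + 1) (t + 1) ≤ (s + t).choose s :=
  ramseyNumber_le (exists_isNClique_or_exists_compl_isNClique_of_choose_le_card le_rfl)

lemma card_lt_of_forall_exists_isNClique_or_exists_compl_isNClique {V : Type*}
    {G : SimpleGraph V} {A : Finset V} {s t N : ℕ}
    (hN : ∀ H : SimpleGraph (Fin N), (∃ S, H.IsNClique s S) ∨ ∃ S, Hᶜ.IsNClique t S)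
    (hs : ∀ S ⊆ A, ¬ G.IsNClique s S) (ht : ∀ S ⊆ A, ¬ Gᶜ.IsNClique t S) : #A < N := by
  by_contra! hle
  let f : Fin N ↪ V :=
    (Fin.castLEEmb hle).trans (A.equivFin.symm.toEmbedding.trans (Function.Embedding.subtype _))
  have hf : ∀ S : Finset (Fin N), S.map f ⊆ A := fun S ↦ by
    simp [subset_iff, f]
  have hcompl : (G.comap f)ᶜ = Gᶜ.comap f := by
    ext i j
    simp [f.injective.ne_iff]
  rcases hN (G.comap f) with ⟨S, hS⟩ | ⟨S, hS⟩
  · exact hs _ (hf S) (hS.map.mono (map_comap_le f G))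
  · exact ht _ (hf S) ((hcompl ▸ hS).map.mono (map_comap_le f Gᶜ))

theorem card_lt_ramseyNumber {V : Type*} {G : SimpleGraph V} {A : Finset V} {s t : ℕ}
    (hs : ∀ S ⊆ A, ¬ G.IsNClique (s + 1) S) (ht : ∀ S ⊆ A, ¬ Gᶜ.IsNClique (t + 1) S) :
    #A < ramseyNumber (s + 1) (t + 1) :=
  card_lt_of_forall_exists_isNClique_or_exists_compl_isNClique
    (exists_isNClique_or_exists_compl_isNClique_ramseyNumber
      (exists_isNClique_or_exists_compl_isNClique_of_choose_le_card le_rfl)) hs ht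

def orthogonalityGraph (F ι : Type*) [CommSemiring F] [Fintype ι] : SimpleGraph (ι → F) where
  Adj u v := u ≠ v ∧ u ⬝ᵥ v = 0
  symm := ⟨fun u v h ↦ ⟨h.1.symm, dotProduct_comm u v ▸ h.2⟩⟩
  loopless := ⟨fun _ h ↦ h.1 rfl⟩

@[simp]
lemma orthogonalityGraph_adj {F ι : Type*} [CommSemiring F] [Fintype ι] {u v : ι → F} :
    (orthogonalityGraph F ι).Adj u v ↔ u ≠ v ∧ u ⬝ᵥ v = 0 :=
  Iff.rfl

theorem card_le_of_isNClique_orthogonalityGraph {F ι : Type*} [Field F] [Fintype ι]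
    {S : Finset (ι → F)} {n : ℕ} (hS : (orthogonalityGraph F ι).IsNClique n S)
    (hns : ∀ v ∈ S, v ⬝ᵥ v ≠ 0) : n ≤ Fintype.card ι := by
  have hli : LinearIndependent F ((↑) : S → ι → F) :=
    LinearMap.BilinForm.linearIndependent_of_iIsOrtho (B := dotProductBilin F F)
      (fun i j hij ↦
        (orthogonalityGraph_adj.mp (hS.isClique i.2 j.2 (Subtype.coe_ne_coe.mpr hij))).2)
      (fun i ↦ hns i i.2)
  simpa [hS.2] using hli.fintype_card_le_finrank

theorem stmt_3_general (F : Type) [Field F] (d k : ℕ)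
    (A : Finset (Fin d → F))
    (hns : ∀ v ∈ A, ∑ i, v i * v i ≠ 0)
    (hno : ∀ S ⊆ A, S.card = k + 1 →
      ∃ u ∈ S, ∃ v ∈ S, u ≠ v ∧ ∑ i, u i * v i = 0) :
    A.card < ramseyNumber (d + 1) (k + 1) ∧ A.card < (d + k).choose k := by
  have hclique : ∀ S ⊆ A, ¬ (orthogonalityGraph F (Fin d)).IsNClique (d + 1) S :=
    fun S hSA hS ↦ by
      simpa using card_le_of_isNClique_orthogonalityGraph hS fun v hv ↦ hns v (hSA hv)
  have hindep : ∀ S ⊆ A, ¬ (orthogonalityGraph F (Fin d))ᶜ.IsNClique (k + 1) S := by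
    rintro S hSA ⟨hS, hcard⟩
    obtain ⟨u, hu, v, hv, huv, horth⟩ := hno S hSA hcard
    exact (hS hu hv huv).2 (orthogonalityGraph_adj.mpr ⟨huv, horth⟩)
  have hR := card_lt_ramseyNumber hclique hindep
  exact ⟨hR, hR.trans_le (Nat.choose_symm_add ▸ ramseyNumber_le_choose d k)⟩

/-- A `k`-nearly orthogonal set `A ⊆ F^d` has size strictly less than the
Ramsey number `R(d+1, k+1)`; in particular `|A| < C(d+k, k)`. -/
theorem stmt_3 (F : Type) [Field F] (d k : ℕ) (hd : 1 ≤ d) (hk : 1 ≤ k)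
    (A : Finset (Fin d → F))
    (hns : ∀ v ∈ A, ∑ i, v i * v i ≠ 0)
    (hno : ∀ S ⊆ A, S.card = k + 1 →
      ∃ u ∈ S, ∃ v ∈ S, u ≠ v ∧ ∑ i, u i * v i = 0) :
    A.card < ramseyNumber (d + 1) (k + 1) ∧ A.card < (d + k).choose k :=
  stmt_3_general F d k A hns hno
end

section
/- For every prime p and every integer t ≥ 1, the orthogonality graph G(p,t) is an (n,d,λ)-graph with n = p^t − 1, d = p^{t−1} − 1, and λ = (p−1)·p^{t/2−1}. -/
/-!
Let `A` be the adjacency matrix of `G(q, n)` over a finite field with `q` elements. The entry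
`(A²)_{uw}` counts the nonzero vectors orthogonal to both `u` and `w`, that is
`q ^ (n - dim span {u, w}) - 1`, so `A² = (q^(n-2) - 1) J + (q^(n-1) - q^(n-2)) D`, where `J` is
the all-ones matrix and `D` records collinearity. `J` kills every `x ⊥ 1`, and `D` is symmetric
with row sums `q - 1`, so `xᵀ D x ≤ (q - 1) ‖x‖²`. Hence
`‖A x‖² = xᵀ A² x ≤ (q - 1)² q^(n-2) ‖x‖² = λ² ‖x‖²`.
-/

open Finset Module Matrix Submodule
open LinearMap (BilinForm)

lemma card_filter_ne_zero {M : Type*} [Zero M] [Fintype M] [DecidableEq M] (P : M → Prop)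
    [DecidablePred P] (h0 : P 0) : #{v : {v : M // v ≠ 0} | P v} = #{v | P v} - 1 := by
  have h : ({v : {v : M // v ≠ 0} | P v} : Finset _) =
      ({v | P v} : Finset M).subtype (· ≠ 0) := by
    ext
    simp
  rw [h, card_subtype, filter_ne', card_erase_of_mem (by simpa using h0)]

section Span

variable {K M : Type*} [Field K] [AddCommGroup M] [Module K M]

lemma mem_span_singleton_comm {u w : M} (hw : w ≠ 0) (h : w ∈ K ∙ u) : u ∈ K ∙ w := by
  obtain ⟨a, rfl⟩ := mem_span_singleton.1 h
  have ha : a ≠ 0 := by rintro rfl; simp at hw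
  exact mem_span_singleton.2 ⟨a⁻¹, inv_smul_smul₀ ha u⟩

lemma finrank_span_pair_of_mem {u w : M} (hu : u ≠ 0) (h : w ∈ K ∙ u) :
    finrank K (span K {u, w}) = 1 := by
  rw [Set.pair_comm, span_insert_eq_span h, finrank_span_singleton hu]

lemma finrank_span_pair_of_notMem {u w : M} (hu : u ≠ 0) (h : w ∉ K ∙ u) :
    finrank K (span K {u, w}) = 2 := by
  have hind : LinearIndependent K ![u, w] :=
    (LinearIndependent.pair_iff' hu).2 fun a ha => h (mem_span_singleton.2 ⟨a, ha⟩)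
  rw [← Matrix.range_cons_cons_empty u w ![], finrank_span_eq_card hind, Fintype.card_fin]

end Span

section DotProduct

variable {K : Type*} [Field K] {ι : Type*} [Fintype ι]

lemma nondegenerate_dotProductBilin :
    BilinForm.Nondegenerate (dotProductBilin K K : BilinForm K (ι → K)) :=
  ⟨fun v hv => dotProduct_eq_zero v hv,
    fun v hv => dotProduct_eq_zero v fun w => by rw [dotProduct_comm]; exact hv w⟩

lemma mem_orthogonal_dotProductBilin_span {s : Set (ι → K)} {v : ι → K} :
    v ∈ BilinForm.orthogonal (dotProductBilin K K) (span K s) ↔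
      ∀ u ∈ s, u ⬝ᵥ v = 0 := by
  rw [BilinForm.mem_orthogonal_iff]
  exact ⟨fun h u hu => h u (subset_span hu),
    fun h u hu => span_induction h (by simp) (by simp_all) (by simp_all) hu⟩

lemma card_filter_forall_dotProduct_eq_zero [Fintype K] [DecidableEq K] [DecidableEq ι]
    (s : Finset (ι → K)) :
    #{v | ∀ u ∈ s, u ⬝ᵥ v = 0} =
      Fintype.card K ^ (Fintype.card ι - finrank K (span K (s : Set (ι → K)))) := by
  have h : #{v | ∀ u ∈ s, u ⬝ᵥ v = 0} =
      Nat.card (BilinForm.orthogonal (dotProductBilin K K) (span K (s : Set (ι → K)))) := by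
    rw [← Fintype.card_subtype, ← Nat.card_eq_fintype_card]
    exact Nat.card_congr (Equiv.subtypeEquivRight fun v =>
      mem_orthogonal_dotProductBilin_span.symm)
  rw [h, natCard_eq_pow_finrank (K := K), Nat.card_eq_fintype_card,
    BilinForm.finrank_orthogonal nondegenerate_dotProductBilin, finrank_fintype_fun_eq_card]

end DotProduct

lemma sum_mulVec_sq {m n : Type*} [Fintype m] [Fintype n] (A : Matrix m n ℝ) (x : n → ℝ) :
    ∑ i, (A *ᵥ x) i ^ 2 = x ⬝ᵥ (Aᵀ * A) *ᵥ x := by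
  rw [← mulVec_mulVec, dotProduct_mulVec, vecMul_transpose]
  simp only [dotProduct, sq]

/-- Schur's test, from `x_i x_j ≤ (x_i² + x_j²) / 2` weighted by `D i j`. -/
lemma dotProduct_mulVec_le_of_sum_row_le {n : Type*} [Fintype n] {D : Matrix n n ℝ}
    (hD : D.IsSymm) (hD₀ : ∀ i j, 0 ≤ D i j) {r : ℝ} (hr : ∀ i, ∑ j, D i j ≤ r)
    (x : n → ℝ) :
    x ⬝ᵥ D *ᵥ x ≤ r * (x ⬝ᵥ x) := by
  have amgm : ∀ i j, x i * (D i j * x j) ≤ D i j * x i ^ 2 / 2 + D j i * x j ^ 2 / 2 := by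
    intro i j
    rw [hD.apply i j]
    nlinarith [mul_nonneg (hD₀ i j) (sq_nonneg (x i - x j))]
  calc x ⬝ᵥ D *ᵥ x = ∑ i, ∑ j, x i * (D i j * x j) := by
        simp only [dotProduct, mulVec, mul_sum]
    _ ≤ ∑ i, ∑ j, (D i j * x i ^ 2 / 2 + D j i * x j ^ 2 / 2) := by
        gcongr with i _ j _
        exact amgm i j
    _ = ∑ i, (∑ j, D i j) * x i ^ 2 := by
        simp only [sum_add_distrib]
        rw [sum_comm (f := fun i j => D j i * x j ^ 2 / 2)]
        simp only [← sum_add_distrib, add_halves, sum_mul]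
    _ ≤ ∑ i, r * x i ^ 2 := by
        gcongr with i _
        exact hr i
    _ = r * (x ⬝ᵥ x) := by simp only [dotProduct, mul_sum, sq]

lemma sub_one_mul_pow_sub_pow_le {q : ℝ} (hq : 1 ≤ q) {n : ℕ} (hn : 1 ≤ n) :
    (q - 1) * (q ^ (n - 1) - q ^ (n - 2)) ≤ ((q - 1) * q ^ ((n : ℝ) / 2 - 1)) ^ 2 := by
  obtain rfl | ⟨m, rfl⟩ : n = 1 ∨ ∃ m, n = m + 2 := by
    rcases n with _ | _ | m <;> simp_all
  · norm_num
    positivity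
  · have hsq : (q ^ (((m + 2 : ℕ) : ℝ) / 2 - 1)) ^ 2 = q ^ m := by
      rw [← Real.rpow_natCast _ 2, ← Real.rpow_mul (by linarith), ← Real.rpow_natCast q m]
      congr 1
      push_cast
      ring
    rw [mul_pow, hsq, show m + 2 - 1 = m + 1 by omega, show m + 2 - 2 = m by omega]
    apply le_of_eq
    ring

section OrthogonalityGraph

variable (K : Type*) [Field K] (ι : Type*)

open Classical in
noncomputable def collinearityMatrix :
    Matrix {v : ι → K // v ≠ 0} {v : ι → K // v ≠ 0} ℝ :=
  of fun u w => if w.1 ∈ K ∙ u.1 then 1 else 0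

lemma collinearityMatrix_isSymm : (collinearityMatrix K ι).IsSymm := by
  ext u w
  simp only [collinearityMatrix, transpose_apply, of_apply]
  congr 1
  exact propext ⟨mem_span_singleton_comm u.2, mem_span_singleton_comm w.2⟩

variable [Fintype ι] [DecidableEq K]

def orthogonalityMatrix : Matrix {v : ι → K // v ≠ 0} {v : ι → K // v ≠ 0} ℝ :=
  of fun u w => if u.1 ⬝ᵥ w.1 = 0 then 1 else 0

lemma orthogonalityMatrix_transpose : (orthogonalityMatrix K ι)ᵀ = orthogonalityMatrix K ι := by
  ext u w
  simp only [orthogonalityMatrix, transpose_apply, of_apply, dotProduct_comm]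

variable [Fintype K] [DecidableEq ι]

lemma card_nonzero_vectors :
    Fintype.card {v : ι → K // v ≠ 0} = Fintype.card K ^ Fintype.card ι - 1 := by
  rw [Fintype.card_subtype_compl, Fintype.card_fun, Fintype.card_subtype_eq]

variable {K ι}

lemma card_filter_dotProduct_eq_zero {v : ι → K} (hv : v ≠ 0) :
    #{w : {w : ι → K // w ≠ 0} | v ⬝ᵥ w.1 = 0} =
      Fintype.card K ^ (Fintype.card ι - 1) - 1 := by
  have h := card_filter_forall_dotProduct_eq_zero {v}
  rw [coe_singleton, finrank_span_singleton hv] at h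
  simp only [mem_singleton, forall_eq] at h
  rw [card_filter_ne_zero (fun w => v ⬝ᵥ w = 0) (dotProduct_zero v), h]

lemma card_filter_dotProduct_eq_zero_and (u w : ι → K) :
    #{v : {v : ι → K // v ≠ 0} | u ⬝ᵥ v.1 = 0 ∧ w ⬝ᵥ v.1 = 0} =
      Fintype.card K ^ (Fintype.card ι - finrank K (span K {u, w})) - 1 := by
  have h := card_filter_forall_dotProduct_eq_zero {u, w}
  rw [coe_insert, coe_singleton] at h
  simp only [mem_insert, mem_singleton, forall_eq_or_imp, forall_eq] at h
  rw [card_filter_ne_zero (fun v => u ⬝ᵥ v = 0 ∧ w ⬝ᵥ v = 0) (by simp), h]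

/-- For `Fintype.card ι = 1` the exponent `n - 2` truncates to `0`; the identity survives
because then any two nonzero vectors are collinear. -/
lemma orthogonalityMatrix_mul_self :
    orthogonalityMatrix K ι * orthogonalityMatrix K ι =
      ((Fintype.card K : ℝ) ^ (Fintype.card ι - 2) - 1) • of (fun _ _ => 1) +
      ((Fintype.card K : ℝ) ^ (Fintype.card ι - 1) -
        (Fintype.card K : ℝ) ^ (Fintype.card ι - 2)) •
        collinearityMatrix K ι := by
  have hq : 1 ≤ Fintype.card K := Fintype.card_pos
  ext u w
  have hcount : (orthogonalityMatrix K ι * orthogonalityMatrix K ι) u w =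
      #{v : {v : ι → K // v ≠ 0} | u.1 ⬝ᵥ v.1 = 0 ∧ w.1 ⬝ᵥ v.1 = 0} := by
    simp only [mul_apply, orthogonalityMatrix, of_apply, dotProduct_comm _ w.1,
      ite_zero_mul_ite_zero, mul_one, sum_boole]
  rw [hcount, card_filter_dotProduct_eq_zero_and]
  by_cases h : w.1 ∈ K ∙ u.1
  · rw [finrank_span_pair_of_mem u.2 h, Nat.cast_sub (Nat.one_le_pow _ _ hq)]
    simp [collinearityMatrix, h]
  · rw [finrank_span_pair_of_notMem u.2 h, Nat.cast_sub (Nat.one_le_pow _ _ hq)]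
    simp [collinearityMatrix, h]

lemma sum_collinearityMatrix_row (u : {v : ι → K // v ≠ 0}) :
    ∑ w, collinearityMatrix K ι u w = Fintype.card K - 1 := by
  classical
  simp only [collinearityMatrix, of_apply, sum_boole]
  rw [card_filter_ne_zero (· ∈ K ∙ u.1) (zero_mem _), ← Fintype.card_subtype,
    card_eq_pow_finrank (K := K), finrank_span_singleton u.2, pow_one,
    Nat.cast_sub Fintype.card_pos, Nat.cast_one]

lemma dotProduct_collinearityMatrix_mulVec_le (x : {v : ι → K // v ≠ 0} → ℝ) :
    x ⬝ᵥ collinearityMatrix K ι *ᵥ x ≤ (Fintype.card K - 1) * (x ⬝ᵥ x) :=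
  dotProduct_mulVec_le_of_sum_row_le (collinearityMatrix_isSymm K ι)
    (fun u w => by simp only [collinearityMatrix, of_apply]; split_ifs <;> norm_num)
    (fun u => (sum_collinearityMatrix_row u).le) x

lemma sum_orthogonalityMatrix_mulVec_sq {x : {v : ι → K // v ≠ 0} → ℝ}
    (hx : ∑ v, x v = 0) :
    ∑ v, (orthogonalityMatrix K ι *ᵥ x) v ^ 2 =
      ((Fintype.card K : ℝ) ^ (Fintype.card ι - 1) -
        (Fintype.card K : ℝ) ^ (Fintype.card ι - 2)) *
        (x ⬝ᵥ collinearityMatrix K ι *ᵥ x) := by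
  have hJ : of (fun (_ _ : {v : ι → K // v ≠ 0}) => (1 : ℝ)) *ᵥ x = 0 := by
    ext
    simp [mulVec, dotProduct, hx]
  rw [sum_mulVec_sq, orthogonalityMatrix_transpose, orthogonalityMatrix_mul_self, add_mulVec,
    smul_mulVec, smul_mulVec, hJ, smul_zero, zero_add, dotProduct_smul, smul_eq_mul]

lemma sum_orthogonalityMatrix_mulVec_sq_le (hι : 1 ≤ Fintype.card ι)
    {x : {v : ι → K // v ≠ 0} → ℝ} (hx : ∑ v, x v = 0) :
    ∑ v, (orthogonalityMatrix K ι *ᵥ x) v ^ 2 ≤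
      (((Fintype.card K : ℝ) - 1) *
        (Fintype.card K : ℝ) ^ ((Fintype.card ι : ℝ) / 2 - 1)) ^ 2 * ∑ v, x v ^ 2 := by
  set q : ℝ := (Fintype.card K : ℝ)
  set n := Fintype.card ι
  have hq : 1 ≤ q := Nat.one_le_cast.2 Fintype.card_pos
  have hB : 0 ≤ q ^ (n - 1) - q ^ (n - 2) := sub_nonneg.2 (pow_le_pow_right₀ hq (by omega))
  rw [sum_orthogonalityMatrix_mulVec_sq hx]
  calc _ ≤ (q ^ (n - 1) - q ^ (n - 2)) * ((q - 1) * (x ⬝ᵥ x)) :=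
        mul_le_mul_of_nonneg_left (dotProduct_collinearityMatrix_mulVec_le x) hB
    _ = (q - 1) * (q ^ (n - 1) - q ^ (n - 2)) * ∑ v, x v ^ 2 := by
        simp only [dotProduct, sq]
        ring
    _ ≤ _ := by
        gcongr
        exact sub_one_mul_pow_sub_pow_le hq hι

end OrthogonalityGraph

open Finset in
/-- For every prime `p` and integer `t ≥ 1`, the orthogonality graph `G(p,t)`
(vertices: nonzero vectors of `F_p^t`; `u ~ v` iff `⟪u,v⟫ = 0`, loops allowed)
is an `(n,d,λ)`-graph with `n = p^t − 1`, `d = p^(t−1) − 1` and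
`λ = (p−1)·p^(t/2−1)`: it has `p^t − 1` vertices, is `(p^(t−1) − 1)`-regular,
and its adjacency matrix satisfies the spectral bound with `λ` on the
orthogonal complement of the all-ones vector. -/
theorem stmt_7 (p : ℕ) [Fact p.Prime] (t : ℕ) (ht : 1 ≤ t) :
    Fintype.card {v : Fin t → ZMod p // v ≠ 0} = p ^ t - 1 ∧
    (∀ v : {v : Fin t → ZMod p // v ≠ 0},
      (univ.filter (fun w : {v : Fin t → ZMod p // v ≠ 0} =>
        ∑ i, v.1 i * w.1 i = 0)).card = p ^ (t - 1) - 1) ∧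
    (∀ x : {v : Fin t → ZMod p // v ≠ 0} → ℝ, (∑ v, x v) = 0 →
      ∑ v, ((Matrix.of fun u w : {v : Fin t → ZMod p // v ≠ 0} =>
          if (∑ i, u.1 i * w.1 i) = 0 then (1 : ℝ) else 0).mulVec x v) ^ 2 ≤
        (((p : ℝ) - 1) * (p : ℝ) ^ ((t : ℝ) / 2 - 1)) ^ 2 * ∑ v, (x v) ^ 2) := by
  have hcard : Fintype.card (ZMod p) = p := ZMod.card p
  refine ⟨?_, fun v => ?_, fun x hx => ?_⟩
  · rw [card_nonzero_vectors, hcard, Fintype.card_fin]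
  · have h := card_filter_dotProduct_eq_zero v.2
    rwa [hcard, Fintype.card_fin] at h
  · have h := sum_orthogonalityMatrix_mulVec_sq_le (by rwa [Fintype.card_fin]) hx
    rwa [hcard, Fintype.card_fin] at h
end

section
/- For every prime p, there exists a constant c = c(p) such that for all positive integers t and k, the number of pairs (C_1, C_2) of subsets of F_p^t \ {0} with |C_1| ≤ k and |C_2| ≤ k, such that <v_1, v_2> ≠ 0 for all v_1 ∈ C_1 and v_2 ∈ C_2, is at most 2^{c(t² + k)} · p^{tk}. -/
/-!
Container argument. Call `x, y` orthogonal when `x ⬝ᵥ y = 0`. The vectors orthogonal to one,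
resp. two independent, nonzero vectors form a subspace of codimension 1, resp. 2, so double
counting bounds the variance of `x ↦ #{y ∈ B | x ⬝ᵥ y = 0}` over `F_q^n` by `#B · q^(n+2)` when
`0 ∉ B`, and by Chebyshev every `A` with `#A · #B > 4q^(n+2)` contains a
vector orthogonal to at least `#B / 2q` elements of `B`.

Run the greedy process on `A = B = F_q^n \ {0}`: pick such an `x ∈ A`; if `x ∈ C₁`, record it
and discard from `B` everything orthogonal to `x` (no element of `C₂` is); in any case discard
`x` from `A`. Stop once `#A · #B ≤ 4q^(n+2)`. The final pair `(A, B)` contains `(C₁ \ F, C₂)`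
and depends only on the set `F ⊆ C₁` of recorded pivots. Each record shrinks `B` by the factor
`1 - 1/2q`, so `#F = O(q²n)`, leaving `2^O(n²)` choices of `F`; given `F`, there are at most
`(k+1)² (8q^(n+2))^k` choices of `(C₁ \ F, C₂)`.
-/

open Finset Matrix

section Containers

variable {α : Type*}

theorem card_filter_not_le_of_le_mul_card_filter {B : Finset α} {p : α → Prop}
    [DecidablePred p] {d : ℕ} (h : #B ≤ d * #{y ∈ B | p y}) :
    (#{y ∈ B | ¬p y} : ℝ) ≤ (1 - 1 / d) * #B := by
  rcases Nat.eq_zero_or_pos d with rfl | hd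
  · simp_all
  have hsplit : (#{y ∈ B | p y} : ℝ) + #{y ∈ B | ¬p y} = #B := by
    exact_mod_cast card_filter_add_card_filter_not (s := B) p
  have hd' : (0 : ℝ) < d := by exact_mod_cast hd
  calc (#{y ∈ B | ¬p y} : ℝ) = #B - #{y ∈ B | p y} := by linarith
    _ ≤ #B - #B / d := by gcongr; rw [div_le_iff₀' hd']; exact_mod_cast h
    _ = (1 - 1 / d) * #B := by ring

variable [DecidableEq α]

theorem exists_containers (R : α → α → Prop) [DecidableRel R] (S : Set α) {T d : ℕ}
    (hsat : ∀ A B : Finset α, ↑B ⊆ S → T < #A * #B → ∃ x ∈ A, #B ≤ d * #{y ∈ B | R x y})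
    (A B : Finset α) (hB : ↑B ⊆ S) :
    ∃ g : Finset α → Finset α × Finset α, (∀ F, #(g F).1 * #(g F).2 ≤ T) ∧
      ∀ C₁ ⊆ A, ∀ C₂ ⊆ B, (∀ x ∈ C₁, ∀ y ∈ C₂, ¬R x y) → ∃ F ⊆ C₁,
        -- the last pivot recorded still saw a nonempty `B`
        (F.Nonempty → 1 - 1 / d ≤ (1 - 1 / d : ℝ) ^ #F * #B) ∧
          C₁ \ F ⊆ (g F).1 ∧ C₂ ⊆ (g F).2 := by
  have hr : (0 : ℝ) ≤ 1 - 1 / d := sub_nonneg.2 (by simpa using Nat.cast_inv_le_one d)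
  induction A using Finset.strongInduction generalizing B with
  | H A ih =>
  by_cases hAB : #A * #B ≤ T
  · exact ⟨fun _ => (A, B), fun _ => hAB, fun C₁ hC₁ C₂ hC₂ _ =>
      ⟨∅, empty_subset _, by simp, by simpa using hC₁, hC₂⟩⟩
  obtain ⟨x, hxA, hx⟩ := hsat A B hB (not_le.1 hAB)
  have hB₁ : (1 : ℝ) ≤ #B := by
    have : #B ≠ 0 := by rintro h; simp [h] at hAB
    exact_mod_cast Nat.one_le_iff_ne_zero.2 this
  have hshrink := card_filter_not_le_of_le_mul_card_filter hx
  obtain ⟨g₁, hg₁T, hg₁⟩ := ih (A.erase x) (erase_ssubset hxA) {y ∈ B | ¬R x y}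
    ((coe_subset.2 (filter_subset _ _)).trans hB)
  obtain ⟨g₂, hg₂T, hg₂⟩ := ih (A.erase x) (erase_ssubset hxA) B hB
  refine ⟨fun F => if x ∈ F then g₁ (F.erase x) else g₂ F,
    fun F => by dsimp only; split_ifs; exacts [hg₁T _, hg₂T _], fun C₁ hC₁ C₂ hC₂ hR => ?_⟩
  by_cases hxC : x ∈ C₁
  · obtain ⟨F, hFC, hFr, hF₁, hF₂⟩ := hg₁ (C₁.erase x) (erase_subset_erase x hC₁) C₂
      (fun y hy => mem_filter.2 ⟨hC₂ hy, hR x hxC y hy⟩)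
      (fun a ha => hR a (mem_of_mem_erase ha))
    have hxF : x ∉ F := fun h => notMem_erase x C₁ (hFC h)
    refine ⟨insert x F, insert_subset hxC (hFC.trans (erase_subset _ _)), fun _ => ?_, ?_, ?_⟩
    · rw [card_insert_of_notMem hxF]
      rcases F.eq_empty_or_nonempty with rfl | hF
      · simpa using le_mul_of_one_le_right hr hB₁
      · calc 1 - 1 / d ≤ (1 - 1 / d : ℝ) ^ #F * #{y ∈ B | ¬R x y} := hFr hF
          _ ≤ (1 - 1 / d : ℝ) ^ #F * ((1 - 1 / d) * #B) := by gcongr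
          _ = (1 - 1 / d : ℝ) ^ (#F + 1) * #B := by ring
    · dsimp only
      rw [if_pos (mem_insert_self x F), erase_insert hxF, sdiff_insert, ← erase_sdiff_comm]
      exact hF₁
    · simpa [hxF] using hF₂
  · have hxF : ∀ F ⊆ C₁, x ∉ F := fun F hF h => hxC (hF h)
    obtain ⟨F, hFC, hFr, hF₁, hF₂⟩ := hg₂ C₁ (subset_erase.2 ⟨hC₁, hxC⟩) C₂ hC₂ hR
    exact ⟨F, hFC, hFr, by simpa [hxF F hFC] using hF₁, by simpa [hxF F hFC] using hF₂⟩

theorem card_powerset_filter_card_le_le (S : Finset α) (k : ℕ) :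
    #{R ∈ S.powerset | #R ≤ k} ≤ (k + 1) * (#S + 1) ^ k := by
  calc #{R ∈ S.powerset | #R ≤ k}
      ≤ #((range (k + 1)).biUnion S.powersetCard) := card_le_card fun R hR => by
        rw [mem_filter, mem_powerset] at hR
        exact mem_biUnion.2 ⟨#R, mem_range.2 (Nat.lt_succ_of_le hR.2), mem_powersetCard.2 ⟨hR.1, rfl⟩⟩
    _ ≤ ∑ j ∈ range (k + 1), #(S.powersetCard j) := card_biUnion_le
    _ ≤ ∑ _j ∈ range (k + 1), (#S + 1) ^ k := sum_le_sum fun j hj => by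
        rw [card_powersetCard]
        calc (#S).choose j ≤ #S ^ j := Nat.choose_le_pow _ _
          _ ≤ (#S + 1) ^ j := Nat.pow_le_pow_left (Nat.le_succ _) _
          _ ≤ (#S + 1) ^ k := Nat.pow_le_pow_right (Nat.succ_pos _) (by grind)
    _ = (k + 1) * (#S + 1) ^ k := by rw [sum_const, card_range, smul_eq_mul]

theorem card_le_of_containers {P : Finset (Finset α × Finset α)} (𝓕 : Finset (Finset α))
    (g : Finset α → Finset α × Finset α) {k M : ℕ}
    (hg : ∀ F ∈ 𝓕, (#(g F).1 + 1) * (#(g F).2 + 1) ≤ M)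
    (hP : ∀ C ∈ P, #C.1 ≤ k ∧ #C.2 ≤ k ∧
      ∃ F ∈ 𝓕, F ⊆ C.1 ∧ C.1 \ F ⊆ (g F).1 ∧ C.2 ⊆ (g F).2) :
    #P ≤ #𝓕 * ((k + 1) ^ 2 * M ^ k) := by
  let small (X : Finset α) := {R ∈ X.powerset | #R ≤ k}
  calc #P ≤ #(𝓕.biUnion fun F =>
        (small (g F).1 ×ˢ small (g F).2).image fun R => (F ∪ R.1, R.2)) := by
        refine card_le_card fun C hC => ?_
        obtain ⟨hC₁, hC₂, F, hF, hFC, hF₁, hF₂⟩ := hP C hC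
        refine mem_biUnion.2 ⟨F, hF, mem_image.2 ⟨(C.1 \ F, C.2), ?_, ?_⟩⟩
        · simp only [small, mem_product, mem_filter, mem_powerset]
          exact ⟨⟨hF₁, (card_le_card sdiff_subset).trans hC₁⟩, hF₂, hC₂⟩
        · rw [union_sdiff_of_subset hFC]
    _ ≤ ∑ F ∈ 𝓕, ((k + 1) ^ 2 * M ^ k) := card_biUnion_le.trans <| sum_le_sum fun F hF => by
        refine card_image_le.trans ?_
        rw [card_product]
        calc #(small (g F).1) * #(small (g F).2)
            ≤ (k + 1) * (#(g F).1 + 1) ^ k * ((k + 1) * (#(g F).2 + 1) ^ k) :=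
              Nat.mul_le_mul (card_powerset_filter_card_le_le _ k) (card_powerset_filter_card_le_le _ k)
          _ = (k + 1) ^ 2 * ((#(g F).1 + 1) * (#(g F).2 + 1)) ^ k := by rw [mul_pow]; ring
          _ ≤ (k + 1) ^ 2 * M ^ k := by gcongr; exact hg F hF
    _ = #𝓕 * ((k + 1) ^ 2 * M ^ k) := by rw [sum_const, smul_eq_mul]

end Containers

theorem le_mul_of_le_pow_mul {d q n m N : ℕ} (hd : 2 ≤ d) (hN : N ≤ q ^ n)
    (h : 1 - 1 / (d : ℝ) ≤ (1 - 1 / d : ℝ) ^ m * N) : m ≤ d * (q * n + 1) := by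
  have hd' : (2 : ℝ) ≤ d := by exact_mod_cast hd
  have hθ : 1 / (d : ℝ) ≤ 1 / 2 := one_div_le_one_div_of_le two_pos hd'
  have h₀ : (0 : ℝ) ≤ 1 - 1 / d := by linarith
  have hpow : (1 - 1 / d : ℝ) ^ m ≤ Real.exp (-(m / d)) := by
    calc (1 - 1 / d : ℝ) ^ m ≤ Real.exp (-(1 / d)) ^ m :=
          pow_le_pow_left₀ h₀ (by linarith [Real.add_one_le_exp (-(1 / d : ℝ))]) m
      _ = Real.exp (-(m / d)) := by rw [← Real.exp_nat_mul]; ring_nf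
  have hexp : Real.exp (m / d) ≤ 2 * N := by
    have : (1 : ℝ) / 2 ≤ Real.exp (-(m / d)) * N :=
      ((by linarith : (1 : ℝ) / 2 ≤ 1 - 1 / d).trans h).trans (by gcongr)
    rw [Real.exp_neg, inv_mul_eq_div, le_div_iff₀ (Real.exp_pos _)] at this
    linarith
  have hqn : 2 * (N : ℝ) ≤ Real.exp (q * n + 1) := by
    calc 2 * (N : ℝ) ≤ Real.exp 1 * Real.exp q ^ n := by
          gcongr
          · linarith [Real.add_one_le_exp (1 : ℝ)]
          · calc (N : ℝ) ≤ (q : ℝ) ^ n := by exact_mod_cast hN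
              _ ≤ Real.exp q ^ n := by gcongr; linarith [Real.add_one_le_exp (q : ℝ)]
      _ = Real.exp (q * n + 1) := by rw [← Real.exp_nat_mul, ← Real.exp_add]; ring_nf
  have : (m : ℝ) / d ≤ q * n + 1 := Real.exp_le_exp.1 (hexp.trans hqn)
  rw [div_le_iff₀ (by positivity)] at this
  exact_mod_cast (by linarith : (m : ℝ) ≤ d * (q * n + 1))

section Orthogonal

variable {K ι : Type*} [Field K] [Fintype K] [DecidableEq K] [Fintype ι] [DecidableEq ι]

local notation "q" => Fintype.card K
local notation "n" => Fintype.card ι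

theorem card_filter_forall_dotProduct_eq_zero_mul {m : Type*} [Fintype m] {w : m → ι → K}
    (hw : LinearIndependent K w) :
    #{x : ι → K | ∀ j, x ⬝ᵥ w j = 0} * q ^ Fintype.card m = q ^ n := by
  set f := (Matrix.of w).mulVecLin
  have hker : #{x : ι → K | ∀ j, x ⬝ᵥ w j = 0} = Nat.card (LinearMap.ker f) := by
    rw [← Fintype.card_subtype, ← Nat.card_eq_fintype_card]
    refine Nat.card_congr (Equiv.subtypeEquivRight fun x => ?_)
    simp [f, funext_iff, mulVec, dotProduct_comm]
  rw [hker, ← LinearIndependent.rank_matrix (M := Matrix.of w) hw, Matrix.rank,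
    Module.natCard_eq_pow_finrank (K := K), Nat.card_eq_fintype_card, ← pow_add, add_comm,
    LinearMap.finrank_range_add_finrank_ker, Module.finrank_fintype_fun_eq_card]

theorem card_filter_dotProduct_eq_zero_mul {y : ι → K} (hy : y ≠ 0) :
    #{x : ι → K | x ⬝ᵥ y = 0} * q = q ^ n := by
  simpa using card_filter_forall_dotProduct_eq_zero_mul
    (linearIndependent_unique_iff.2 hy : LinearIndependent K fun _ : Unit => y)

theorem card_filter_dotProduct_eq_zero_and_mul {y y' : ι → K} (hy : y ≠ 0)
    (hyy' : ∀ c : K, c • y ≠ y') :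
    #{x : ι → K | x ⬝ᵥ y = 0 ∧ x ⬝ᵥ y' = 0} * q ^ 2 = q ^ n := by
  simpa [Fin.forall_fin_two] using card_filter_forall_dotProduct_eq_zero_mul
    ((LinearIndependent.pair_iff' hy).2 hyy')


theorem sum_card_filter_dotProduct_eq_zero_mul (B : Finset (ι → K)) (hB : 0 ∉ B) :
    (∑ x, #{y ∈ B | x ⬝ᵥ y = 0}) * q = #B * q ^ n := by
  rw [show ∑ x, #{y ∈ B | x ⬝ᵥ y = 0} = ∑ y ∈ B, #{x : ι → K | x ⬝ᵥ y = 0} from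
    sum_card_bipartiteAbove_eq_sum_card_bipartiteBelow _, sum_mul, card_eq_sum_ones B, sum_mul]
  refine sum_congr rfl fun y hy => ?_
  rw [card_filter_dotProduct_eq_zero_mul (ne_of_mem_of_not_mem hy hB), one_mul]

theorem sum_card_filter_dotProduct_eq_zero_and_mul_le {y : ι → K} (hy : y ≠ 0)
    (B : Finset (ι → K)) :
    (∑ y' ∈ B, #{x : ι → K | x ⬝ᵥ y = 0 ∧ x ⬝ᵥ y' = 0}) * q ^ 2 ≤ #B * q ^ n + q ^ (n + 2) := by
  -- `y'` off the line through `y` is linearly independent from `y`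
  rw [← sum_filter_not_add_sum_filter B (fun y' => ∃ c : K, c • y = y'), add_mul]
  refine add_le_add ?_ ?_
  · calc (∑ y' ∈ B with ¬∃ c : K, c • y = y', #{x : ι → K | x ⬝ᵥ y = 0 ∧ x ⬝ᵥ y' = 0}) * q ^ 2
          = ∑ y' ∈ B with ¬∃ c : K, c • y = y', q ^ n := by
          rw [sum_mul]
          refine sum_congr rfl fun y' hy' => ?_
          exact card_filter_dotProduct_eq_zero_and_mul hy (by simpa using (mem_filter.1 hy').2)
      _ ≤ #B * q ^ n := by
          rw [sum_const, smul_eq_mul]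
          exact Nat.mul_le_mul_right _ (card_filter_le _ _)
  · have hline : #{y' ∈ B | ∃ c : K, c • y = y'} ≤ q :=
      (card_le_card fun y' hy' => by simpa using (mem_filter.1 hy').2).trans
        (card_image_le (s := univ) (f := (· • y)))
    calc (∑ y' ∈ B with ∃ c : K, c • y = y', #{x : ι → K | x ⬝ᵥ y = 0 ∧ x ⬝ᵥ y' = 0}) * q ^ 2
        ≤ (∑ y' ∈ B with ∃ c : K, c • y = y', #{x : ι → K | x ⬝ᵥ y = 0}) * q ^ 2 := by
          gcongr with y' _ x
          exact And.left
      _ = #{y' ∈ B | ∃ c : K, c • y = y'} * q * (#{x : ι → K | x ⬝ᵥ y = 0} * q) := by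
          rw [sum_const, smul_eq_mul]; ring
      _ ≤ q * q * q ^ n := by
          rw [card_filter_dotProduct_eq_zero_mul hy]; gcongr
      _ = q ^ (n + 2) := by ring

theorem sum_sq_card_filter_dotProduct_eq_zero_mul_le (B : Finset (ι → K)) (hB : 0 ∉ B) :
    (∑ x, #{y ∈ B | x ⬝ᵥ y = 0} ^ 2) * q ^ 2 ≤ #B ^ 2 * q ^ n + #B * q ^ (n + 2) := by
  have hsq : ∀ x : ι → K, #{y ∈ B | x ⬝ᵥ y = 0} ^ 2 =
      #(bipartiteAbove (fun x z => x ⬝ᵥ z.1 = 0 ∧ x ⬝ᵥ z.2 = 0) (B ×ˢ B) x) := by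
    intro x
    rw [sq, ← card_product, ← filter_product]
    rfl
  simp_rw [hsq]
  rw [sum_card_bipartiteAbove_eq_sum_card_bipartiteBelow, sum_product, sum_mul]
  calc ∑ y ∈ B, (∑ y' ∈ B, #(bipartiteBelow (fun x z => x ⬝ᵥ z.1 = 0 ∧ x ⬝ᵥ z.2 = 0)
          univ (y, y'))) * q ^ 2
      ≤ ∑ _y ∈ B, (#B * q ^ n + q ^ (n + 2)) :=
        sum_le_sum fun y hy =>
          sum_card_filter_dotProduct_eq_zero_and_mul_le (ne_of_mem_of_not_mem hy hB) B
    _ = #B ^ 2 * q ^ n + #B * q ^ (n + 2) := by rw [sum_const, smul_eq_mul]; ring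

theorem sum_sq_sub_mul_card_filter_dotProduct_eq_zero_le (B : Finset (ι → K)) (hB : 0 ∉ B) :
    ∑ x : ι → K, ((#B : ℤ) - q * #{y ∈ B | x ⬝ᵥ y = 0}) ^ 2 ≤ #B * q ^ (n + 2) := by
  have h₁ : (∑ x : ι → K, (#{y ∈ B | x ⬝ᵥ y = 0} : ℤ)) * q = #B * q ^ n := by
    exact_mod_cast sum_card_filter_dotProduct_eq_zero_mul B hB
  have h₂ : (∑ x : ι → K, (#{y ∈ B | x ⬝ᵥ y = 0} : ℤ) ^ 2) * q ^ 2 ≤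
      #B ^ 2 * q ^ n + #B * q ^ (n + 2) := by
    exact_mod_cast sum_sq_card_filter_dotProduct_eq_zero_mul_le B hB
  simp only [sub_sq, sum_add_distrib, sum_sub_distrib, sum_const, card_univ, Fintype.card_fun,
    nsmul_eq_mul, ← mul_sum, mul_pow]
  push_cast
  linear_combination h₂ - 2 * (#B : ℤ) * h₁

theorem exists_mem_le_mul_card_filter_dotProduct_eq_zero {A B : Finset (ι → K)} (hB : 0 ∉ B)
    (hAB : 4 * q ^ (n + 2) < #A * #B) : ∃ x ∈ A, #B ≤ 2 * q * #{y ∈ B | x ⬝ᵥ y = 0} := by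
  by_contra! hA
  have hpoint : ∀ x ∈ A, (#B : ℤ) ^ 2 ≤ 4 * ((#B : ℤ) - q * #{y ∈ B | x ⬝ᵥ y = 0}) ^ 2 := by
    intro x hx
    have := hA x hx
    have : (2 * q * #{y ∈ B | x ⬝ᵥ y = 0} : ℤ) < #B := by exact_mod_cast this
    nlinarith [Int.natCast_nonneg (q * #{y ∈ B | x ⬝ᵥ y = 0})]
  have hsum : (#A : ℤ) * #B ^ 2 ≤ 4 * (#B * q ^ (n + 2)) := calc
    (#A : ℤ) * #B ^ 2 ≤ ∑ x ∈ A, 4 * ((#B : ℤ) - q * #{y ∈ B | x ⬝ᵥ y = 0}) ^ 2 := by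
      simpa using sum_le_sum hpoint
    _ ≤ ∑ x : ι → K, 4 * ((#B : ℤ) - q * #{y ∈ B | x ⬝ᵥ y = 0}) ^ 2 :=
      sum_le_sum_of_subset_of_nonneg (subset_univ A) fun _ _ _ => by positivity
    _ ≤ 4 * (#B * q ^ (n + 2)) := by
      rw [← mul_sum]
      exact mul_le_mul_of_nonneg_left (sum_sq_sub_mul_card_filter_dotProduct_eq_zero_le B hB)
        (by norm_num)
  have hAB' : (4 * q ^ (n + 2) : ℤ) < #A * #B := by exact_mod_cast hAB
  have hB₀ : (0 : ℤ) < #B := by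
    have : #B ≠ 0 := by rintro h; simp [h] at hAB
    positivity
  nlinarith [mul_lt_mul_of_pos_right hAB' hB₀]

theorem card_nonorthogonal_pairs_le (k : ℕ) :
    Nat.card {C : Finset (ι → K) × Finset (ι → K) // (∀ v ∈ C.1, v ≠ 0) ∧ (∀ v ∈ C.2, v ≠ 0) ∧
        #C.1 ≤ k ∧ #C.2 ≤ k ∧ ∀ v₁ ∈ C.1, ∀ v₂ ∈ C.2, v₁ ⬝ᵥ v₂ ≠ 0} ≤
      (2 * q * (q * n + 1) + 1) * (q ^ n + 1) ^ (2 * q * (q * n + 1)) *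
        ((k + 1) ^ 2 * (8 * q ^ (n + 2)) ^ k) := by
  classical
  rw [Nat.card_eq_fintype_card, Fintype.card_subtype]
  have hq : 2 ≤ q := Fintype.one_lt_card
  have hcard : ∀ X : Finset (ι → K), #X ≤ q ^ n := fun X =>
    (card_le_univ X).trans_eq Fintype.card_fun
  obtain ⟨g, hgT, hg⟩ := exists_containers (fun x y : ι → K => x ⬝ᵥ y = 0) {0}ᶜ
    (fun A B hB hAB => exists_mem_le_mul_card_filter_dotProduct_eq_zero
      (by simpa using hB) hAB) (univ.erase 0) (univ.erase 0) (by simp)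
  refine (card_le_of_containers {F ∈ univ.powerset | #F ≤ 2 * q * (q * n + 1)} g
    (k := k) (M := 8 * q ^ (n + 2)) ?_ ?_).trans ?_
  · intro F _
    have : 4 * q ^ n ≤ q ^ (n + 2) := by
      rw [pow_add, mul_comm]; exact Nat.mul_le_mul_left _ (by nlinarith)
    have : 1 ≤ q ^ n := Nat.one_le_pow _ _ (by omega)
    linarith [hgT F, hcard (g F).1, hcard (g F).2]
  · intro C hC
    simp only [mem_filter, mem_univ, true_and] at hC
    obtain ⟨h₁, h₂, hk₁, hk₂, hC⟩ := hC
    obtain ⟨F, hFC, hFr, hF₁, hF₂⟩ := hg C.1 (fun v hv => by simpa using h₁ v hv) C.2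
      (fun v hv => by simpa using h₂ v hv) hC
    refine ⟨hk₁, hk₂, F, mem_filter.2 ⟨mem_powerset.2 (subset_univ F), ?_⟩, hFC, hF₁, hF₂⟩
    rcases F.eq_empty_or_nonempty with rfl | hF
    · simp
    · exact le_mul_of_le_pow_mul (by omega) (hcard _) (by exact_mod_cast hFr hF)
  · gcongr
    simpa using card_powerset_filter_card_le_le (univ : Finset (ι → K)) (2 * q * (q * n + 1))

end Orthogonal

theorem mul_pow_le_two_pow_mul_pow {q n k : ℕ} (hq : 2 ≤ q) (hn : 1 ≤ n) :
    (2 * q * (q * n + 1) + 1) * (q ^ n + 1) ^ (2 * q * (q * n + 1)) *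
        ((k + 1) ^ 2 * (8 * q ^ (n + 2)) ^ k) ≤
      2 ^ (12 * q ^ 3 * (n ^ 2 + k)) * q ^ (n * k) := by
  have hpow : ∀ m : ℕ, m + 1 ≤ 2 ^ m := fun m => Nat.lt_two_pow_self
  have hq₂ : q ≤ 2 ^ q := (hpow q).trans' (Nat.le_succ q)
  have hqn : q ^ n + 1 ≤ 2 ^ (q * n + 1) := by
    have : q ^ n ≤ 2 ^ (q * n) := by rw [pow_mul]; exact Nat.pow_le_pow_left hq₂ n
    have : 1 ≤ q ^ n := Nat.one_le_pow _ _ (by omega)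
    rw [pow_succ]; omega
  have hk : (k + 1) ^ 2 ≤ 2 ^ (2 * k) := by
    rw [mul_comm, pow_mul]; exact Nat.pow_le_pow_left (hpow k) 2
  have h₈ : (8 * q ^ (n + 2)) ^ k ≤ 2 ^ ((2 * q + 3) * k) * q ^ (n * k) := by
    calc (8 * q ^ (n + 2)) ^ k = (8 * q ^ 2 * q ^ n) ^ k := by ring
      _ ≤ (8 * (2 ^ q) ^ 2 * q ^ n) ^ k := by gcongr
      _ = 2 ^ ((2 * q + 3) * k) * q ^ (n * k) := by rw [pow_mul, pow_mul]; ring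
  have hexp : 2 * q * (q * n + 1) * (q * n + 2) + (2 * q + 5) * k ≤ 12 * q ^ 3 * (n ^ 2 + k) := by
    have h₁ : q * n + 1 ≤ 2 * (q * n) := by nlinarith
    have h₂ : q * n + 2 ≤ 3 * (q * n) := by nlinarith
    have h₃ : 2 * q + 5 ≤ 12 * q ^ 3 := by nlinarith [Nat.le_self_pow (by norm_num : 3 ≠ 0) q]
    calc 2 * q * (q * n + 1) * (q * n + 2) + (2 * q + 5) * k
        ≤ 2 * q * (2 * (q * n)) * (3 * (q * n)) + 12 * q ^ 3 * k := by gcongr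
      _ = 12 * q ^ 3 * (n ^ 2 + k) := by ring
  calc (2 * q * (q * n + 1) + 1) * (q ^ n + 1) ^ (2 * q * (q * n + 1)) *
        ((k + 1) ^ 2 * (8 * q ^ (n + 2)) ^ k)
      ≤ 2 ^ (2 * q * (q * n + 1)) * (2 ^ (q * n + 1)) ^ (2 * q * (q * n + 1)) *
          (2 ^ (2 * k) * (2 ^ ((2 * q + 3) * k) * q ^ (n * k))) := by
        gcongr; apply hpow
    _ = 2 ^ (2 * q * (q * n + 1) * (q * n + 2) + (2 * q + 5) * k) * q ^ (n * k) := by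
        rw [← pow_mul]; ring
    _ ≤ 2 ^ (12 * q ^ 3 * (n ^ 2 + k)) * q ^ (n * k) := by gcongr; norm_num

/-- For every prime `p` there is a constant `c = c(p)` such that for all
positive integers `t` and `k`, the number of pairs `(C₁, C₂)` of subsets of
`F_p^t \ {0}` with `|C₁| ≤ k`, `|C₂| ≤ k` and `⟪v₁,v₂⟫ ≠ 0` for all `v₁ ∈ C₁`,
`v₂ ∈ C₂`, is at most `2^(c(t²+k)) · p^(tk)`. -/
theorem stmt_9 (p : ℕ) (hp : p.Prime) :
    ∃ c : ℝ, ∀ t k : ℕ, 1 ≤ t → 1 ≤ k →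
      (Nat.card {C : Finset (Fin t → ZMod p) × Finset (Fin t → ZMod p) //
          (∀ v ∈ C.1, v ≠ 0) ∧ (∀ v ∈ C.2, v ≠ 0) ∧
          C.1.card ≤ k ∧ C.2.card ≤ k ∧
          ∀ v₁ ∈ C.1, ∀ v₂ ∈ C.2, ∑ i, v₁ i * v₂ i ≠ 0} : ℝ) ≤
        2 ^ (c * ((t : ℝ) ^ 2 + k)) * (p : ℝ) ^ (t * k) := by
  have := Fact.mk hp
  refine ⟨(12 * p ^ 3 : ℕ), fun t k ht _ => ?_⟩
  have key := (card_nonorthogonal_pairs_le (K := ZMod p) (ι := Fin t) k).trans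
    (mul_pow_le_two_pow_mul_pow (k := k) (by simpa using hp.two_le) (by simpa using ht))
  simp only [ZMod.card, Fintype.card_fin] at key
  calc _ ≤ ((2 ^ (12 * p ^ 3 * (t ^ 2 + k)) * p ^ (t * k) : ℕ) : ℝ) := by exact_mod_cast key
    _ = 2 ^ ((12 * p ^ 3 * (t ^ 2 + k) : ℕ) : ℝ) * (p : ℝ) ^ (t * k) := by
      rw [Real.rpow_natCast]; push_cast; rfl
    _ = _ := by push_cast; ring_nf
end
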